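/- arXiv:2110.09102 — 2 statements merged into one kernel-verified Lean document; each statement's English description precedes it below -/
import Mathlib

section
/- Let a, b be distinct vertices of a k-connected graph, each contained in a small tight set, with minimal small tight sets A = R_a and B = R_b. If A and B are not laminar (neither disjoint nor one contained in the other), then a ∈ ∂B or b ∈ ∂A. -/
open Set

variable {V : Type*} [Fintype V] [DecidableEq V]

/-- The boundary (neighborhood) of a vertex set: vertices outside `A` adjacent to `A`. -/
def bdry (G : SimpleGraph V) (A : Set V) : Set V := {v | v ∉ A ∧ ∃ a ∈ A, G.Adj a v}

/-- The "node complement" `A* = V \ (A ∪ ∂A)`. -/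
def nstar (G : SimpleGraph V) (A : Set V) : Set V := (A ∪ bdry G A)ᶜ

/-- `C` is a vertex set separating `s` from `t`. -/
def IsSep (G : SimpleGraph V) (s t : V) (C : Set V) : Prop :=
  s ∉ C ∧ t ∉ C ∧ ∀ p : G.Walk s t, ∃ v ∈ C, v ∈ p.support

/-- `κ(s,t)`: minimum size of an `s`–`t` vertex cut. -/
noncomputable def kappa (G : SimpleGraph V) (s t : V) : ℕ :=
  sInf {n | ∃ C : Set V, C.ncard = n ∧ IsSep G s t C}

/-- A set is tight if `|∂A| = k` and `A* ≠ ∅`. -/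
def Tight (G : SimpleGraph V) (k : ℕ) (A : Set V) : Prop :=
  (bdry G A).ncard = k ∧ (nstar G A).Nonempty

/-- A set is small if `|A| ≤ (n - k)/2`. -/
def SmallSet (k : ℕ) (A : Set V) : Prop := 2 * A.ncard + k ≤ Fintype.card V

/-- `G` is `k`-connected. -/
def KConn (G : SimpleGraph V) (k : ℕ) : Prop :=
  k + 1 ≤ Fintype.card V ∧
    ∀ s t : V, s ≠ t → ∀ C : Set V, IsSep G s t C → k ≤ C.ncard

/-- degree of a vertex -/
noncomputable def deg (G : SimpleGraph V) (v : V) : ℕ := (G.neighborSet v).ncard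

/-- `X` is an `st`-tight set: `s ∈ X`, `t ∈ X*` and `|∂X| = κ(s,t)`. -/
def TightST (G : SimpleGraph V) (s t : V) (X : Set V) : Prop :=
  s ∈ X ∧ t ∈ nstar G X ∧ (bdry G X).ncard = kappa G s t

/-- `R_s`: intersection of all small tight sets containing `s`. -/
def Rmin (G : SimpleGraph V) (k : ℕ) (s : V) : Set V :=
  ⋂₀ {A : Set V | Tight G k A ∧ SmallSet k A ∧ s ∈ A}

/-- Two sets are laminar if disjoint or one contains the other. -/
def Laminar (X Y : Set V) : Prop := Disjoint X Y ∨ X ⊆ Y ∨ Y ⊆ X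

/-- `d`-degeneracy: every nonempty vertex subset has a vertex with at most `d`
neighbors inside it. -/
def Degenerate (G : SimpleGraph V) (d : ℕ) : Prop :=
  ∀ W : Set V, W.Nonempty → ∃ v ∈ W, (G.neighborSet v ∩ W).ncard ≤ d

/-- The set of vertices reachable from `s` avoiding `C`. -/
def Reach (G : SimpleGraph V) (C : Set V) (s : V) : Set V :=
  {v | ∃ p : G.Walk s v, ∀ u ∈ p.support, u ∉ C}


/-!
Small tight sets containing a fixed vertex are closed under intersection, by submodularity of
`X ↦ |∂X|` together with `k`-connectivity, so `R_v` is itself a small tight set. If `a ∉ ∂B` and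
`b ∉ ∂A`, minimality of `A` and `B` forces `a ∈ B*` and `b ∈ A*`. The crossing inequality
`|∂(A ∩ B*)| + |∂(B ∩ A*)| ≤ |∂A| + |∂B| = 2k` then makes `A ∩ B*` a small tight set containing
`a`, so `A ⊆ A ∩ B*`, which is impossible since `A` meets `B`.
-/

theorem Set.ncard_add_ncard_le_of_subset_union {α : Type*} [Finite α] {P Q A B : Set α}
    (hP : P ⊆ A ∪ B) (hQ : Q ⊆ A ∪ B) (hPQ : P ∩ Q ⊆ A ∩ B) :
    P.ncard + Q.ncard ≤ A.ncard + B.ncard := by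
  rw [← Set.ncard_union_add_ncard_inter P Q, ← Set.ncard_union_add_ncard_inter A B]
  exact add_le_add (Set.ncard_le_ncard (Set.union_subset hP hQ)) (Set.ncard_le_ncard hPQ)

theorem Set.sInter_mem_of_inter_mem {α : Type*} [Finite α] {S : Set (Set α)}
    (hne : S.Nonempty) (hinter : ∀ X ∈ S, ∀ Y ∈ S, X ∩ Y ∈ S) : ⋂₀ S ∈ S := by
  obtain ⟨X, hXS, hXmin⟩ := S.toFinite.exists_minimal hne
  have hX : ⋂₀ S = X := (Set.sInter_subset_of_mem hXS).antisymm <| Set.subset_sInter fun Y hY =>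
    (hXmin (hinter X hXS Y hY) Set.inter_subset_left).trans Set.inter_subset_right
  exact hX ▸ hXS

section Boundary

variable {W : Type*} {G : SimpleGraph W} {X Y : Set W} {u v : W}

theorem mem_nstar : v ∈ nstar G X ↔ v ∉ X ∧ v ∉ bdry G X := by
  simp [nstar]

theorem union_bdry_subset_union_bdry (h : X ⊆ Y) : X ∪ bdry G X ⊆ Y ∪ bdry G Y := by
  rintro v (hv | ⟨-, u, huX, huv⟩)
  · exact Or.inl (h hv)
  · by_cases hvY : v ∈ Y
    · exact Or.inl hvY
    · exact Or.inr ⟨hvY, u, h huX, huv⟩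

theorem nstar_anti (h : X ⊆ Y) : nstar G Y ⊆ nstar G X :=
  Set.compl_subset_compl.2 (union_bdry_subset_union_bdry h)

theorem not_mem_of_mem_nstar_of_adj (hu : u ∈ nstar G Y) (huv : G.Adj u v) : v ∉ Y :=
  fun hvY => (mem_nstar.1 hu).2 ⟨(mem_nstar.1 hu).1, v, hvY, huv.symm⟩

theorem exists_mem_bdry_mem_support {s t : W} (p : G.Walk s t) (hs : s ∈ X) (ht : t ∉ X) :
    ∃ v ∈ bdry G X, v ∈ p.support := by
  induction p with
  | nil => exact absurd hs ht
  | @cons s u t hsu q ih =>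
    by_cases hu : u ∈ X
    · obtain ⟨v, hv, hvq⟩ := ih hu ht
      exact ⟨v, hv, List.mem_cons_of_mem s hvq⟩
    · exact ⟨u, ⟨hu, s, hs, hsu⟩, by simp⟩

theorem isSep_bdry {s t : W} (hs : s ∈ X) (ht : t ∈ nstar G X) : IsSep G s t (bdry G X) :=
  ⟨fun h => h.1 hs, (mem_nstar.1 ht).2,
    fun p => exists_mem_bdry_mem_support p hs (mem_nstar.1 ht).1⟩

theorem bdry_inter_subset : bdry G (X ∩ Y) ⊆ bdry G X ∪ bdry G Y := by
  rintro v ⟨hv, u, ⟨huX, huY⟩, huv⟩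
  by_cases hvX : v ∈ X
  · exact Or.inr ⟨fun hvY => hv ⟨hvX, hvY⟩, u, huY, huv⟩
  · exact Or.inl ⟨hvX, u, huX, huv⟩

theorem bdry_union_subset : bdry G (X ∪ Y) ⊆ bdry G X ∪ bdry G Y := by
  rintro v ⟨hv, u, hu | hu, huv⟩
  · exact Or.inl ⟨fun h => hv (Or.inl h), u, hu, huv⟩
  · exact Or.inr ⟨fun h => hv (Or.inr h), u, hu, huv⟩

theorem bdry_inter_inter_bdry_union_subset :
    bdry G (X ∩ Y) ∩ bdry G (X ∪ Y) ⊆ bdry G X ∩ bdry G Y := by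
  rintro v ⟨⟨-, u, ⟨huX, huY⟩, huv⟩, hv, -⟩
  exact ⟨⟨fun h => hv (Or.inl h), u, huX, huv⟩, ⟨fun h => hv (Or.inr h), u, huY, huv⟩⟩

theorem bdry_inter_nstar_subset : bdry G (X ∩ nstar G Y) ⊆ bdry G X ∪ bdry G Y := by
  rintro v ⟨hv, u, ⟨huX, huY⟩, huv⟩
  by_cases hvX : v ∈ X
  · have hvY : v ∉ nstar G Y := fun h => hv ⟨hvX, h⟩
    simp only [mem_nstar, not_and, not_not] at hvY
    exact Or.inr (hvY (not_mem_of_mem_nstar_of_adj huY huv))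
  · exact Or.inl ⟨hvX, u, huX, huv⟩

theorem bdry_inter_nstar_inter_bdry_inter_nstar_subset :
    bdry G (X ∩ nstar G Y) ∩ bdry G (Y ∩ nstar G X) ⊆ bdry G X ∩ bdry G Y := by
  rintro v ⟨⟨-, u, ⟨huX, huY⟩, huv⟩, ⟨-, w, ⟨hwY, hwX⟩, hwv⟩⟩
  exact ⟨⟨not_mem_of_mem_nstar_of_adj hwX hwv, u, huX, huv⟩,
    ⟨not_mem_of_mem_nstar_of_adj huY huv, w, hwY, hwv⟩⟩

variable [Finite W]

theorem ncard_bdry_inter_add_ncard_bdry_union_le :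
    (bdry G (X ∩ Y)).ncard + (bdry G (X ∪ Y)).ncard ≤ (bdry G X).ncard + (bdry G Y).ncard :=
  Set.ncard_add_ncard_le_of_subset_union bdry_inter_subset bdry_union_subset
    bdry_inter_inter_bdry_union_subset

theorem ncard_bdry_inter_nstar_add_ncard_bdry_inter_nstar_le :
    (bdry G (X ∩ nstar G Y)).ncard + (bdry G (Y ∩ nstar G X)).ncard ≤
      (bdry G X).ncard + (bdry G Y).ncard :=
  Set.ncard_add_ncard_le_of_subset_union bdry_inter_nstar_subset
    (Set.union_comm (bdry G Y) _ ▸ bdry_inter_nstar_subset)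
    bdry_inter_nstar_inter_bdry_inter_nstar_subset

end Boundary

section Tight

variable {W : Type*} [Fintype W] {G : SimpleGraph W} {k : ℕ} {X Y : Set W}

theorem SmallSet.mono (hY : SmallSet k Y) (h : X ⊆ Y) : SmallSet k X := by
  have := Set.ncard_le_ncard h
  unfold SmallSet at *
  omega

theorem KConn.le_ncard_bdry (hG : KConn G k) (hX : X.Nonempty) (hX' : (nstar G X).Nonempty) :
    k ≤ (bdry G X).ncard := by
  obtain ⟨s, hs⟩ := hX
  obtain ⟨t, ht⟩ := hX'
  exact hG.2 s t (fun hst => (mem_nstar.1 (hst ▸ ht)).1 hs) _ (isSep_bdry hs ht)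

theorem KConn.le_ncard_bdry_of_ncard_add_le (hG : KConn G k) (hX : X.Nonempty)
    (hsize : X.ncard + k ≤ Fintype.card W) : k ≤ (bdry G X).ncard := by
  rcases (nstar G X).eq_empty_or_nonempty with hX' | hX'
  · have hcover : X ∪ bdry G X = Set.univ := Set.compl_empty_iff.1 hX'
    have := Set.ncard_union_le X (bdry G X)
    rw [hcover, Set.ncard_univ, Nat.card_eq_fintype_card] at this
    omega
  · exact hG.le_ncard_bdry hX hX'

theorem KConn.tight_inter (hG : KConn G k) (hX : Tight G k X) (hY : Tight G k Y)
    (hXs : SmallSet k X) (hYs : SmallSet k Y) (hXY : (X ∩ Y).Nonempty) : Tight G k (X ∩ Y) := by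
  have hstar : (nstar G (X ∩ Y)).Nonempty := hX.2.mono (nstar_anti Set.inter_subset_left)
  have hinter := hG.le_ncard_bdry hXY hstar
  have hunion : k ≤ (bdry G (X ∪ Y)).ncard := by
    refine hG.le_ncard_bdry_of_ncard_add_le (hXY.mono (Set.inter_subset_left.trans Set.subset_union_left)) ?_
    have := Set.ncard_union_le X Y
    unfold SmallSet at hXs hYs
    omega
  have := ncard_bdry_inter_add_ncard_bdry_union_le (G := G) (X := X) (Y := Y)
  exact ⟨by rw [hX.1, hY.1] at this; omega, hstar⟩

theorem KConn.tight_inter_nstar (hG : KConn G k) (hX : Tight G k X) (hY : Tight G k Y)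
    {x y : W} (hx : x ∈ X ∩ nstar G Y) (hy : y ∈ Y ∩ nstar G X) : Tight G k (X ∩ nstar G Y) := by
  have hXstar : (nstar G (X ∩ nstar G Y)).Nonempty :=
    ⟨y, nstar_anti Set.inter_subset_left hy.2⟩
  have hYstar : (nstar G (Y ∩ nstar G X)).Nonempty :=
    ⟨x, nstar_anti Set.inter_subset_left hx.2⟩
  have h1 := hG.le_ncard_bdry ⟨x, hx⟩ hXstar
  have h2 := hG.le_ncard_bdry ⟨y, hy⟩ hYstar
  have := ncard_bdry_inter_nstar_add_ncard_bdry_inter_nstar_le (G := G) (X := X) (Y := Y)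
  exact ⟨by rw [hX.1, hY.1] at this; omega, hXstar⟩

theorem Rmin_subset {s : W} (hX : Tight G k X ∧ SmallSet k X ∧ s ∈ X) : Rmin G k s ⊆ X :=
  Set.sInter_subset_of_mem hX

theorem KConn.Rmin_mem (hG : KConn G k) {s : W}
    (hs : ∃ X : Set W, Tight G k X ∧ SmallSet k X ∧ s ∈ X) :
    Tight G k (Rmin G k s) ∧ SmallSet k (Rmin G k s) ∧ s ∈ Rmin G k s :=
  Set.sInter_mem_of_inter_mem hs fun _ ⟨hXt, hXs, hsX⟩ _ ⟨hYt, hYs, hsY⟩ =>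
    ⟨hG.tight_inter hXt hYt hXs hYs ⟨s, hsX, hsY⟩, hXs.mono Set.inter_subset_left, hsX, hsY⟩

end Tight

theorem stmt5_general (G : SimpleGraph V) (k : ℕ) (a b : V) (hG : KConn G k)
    (ha : ∃ A : Set V, Tight G k A ∧ SmallSet k A ∧ a ∈ A)
    (hb : ∃ A : Set V, Tight G k A ∧ SmallSet k A ∧ b ∈ A)
    (hnl : ¬ Laminar (Rmin G k a) (Rmin G k b)) :
    a ∈ bdry G (Rmin G k b) ∨ b ∈ bdry G (Rmin G k a) := by
  set A := Rmin G k a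
  set B := Rmin G k b
  obtain ⟨hAt, hAs, haA⟩ := hG.Rmin_mem ha
  obtain ⟨hBt, hBs, hbB⟩ := hG.Rmin_mem hb
  simp only [Laminar, not_or, Set.not_disjoint_iff] at hnl
  obtain ⟨⟨c, hcA, hcB⟩, hAB, hBA⟩ := hnl
  by_contra! hbdry
  have haB : a ∈ nstar G B :=
    mem_nstar.2 ⟨fun haB => hAB (Rmin_subset ⟨hBt, hBs, haB⟩), hbdry.1⟩
  have hbA : b ∈ nstar G A :=
    mem_nstar.2 ⟨fun hbA => hBA (Rmin_subset ⟨hAt, hAs, hbA⟩), hbdry.2⟩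
  have hAB' : A ⊆ A ∩ nstar G B := Rmin_subset
    ⟨hG.tight_inter_nstar hAt hBt ⟨haA, haB⟩ ⟨hbB, hbA⟩, hAs.mono Set.inter_subset_left, haA, haB⟩
  exact (mem_nstar.1 (hAB' hcA).2).1 hcB

theorem stmt5 (G : SimpleGraph V) (k : ℕ) (a b : V) (hG : KConn G k) (hab : a ≠ b)
    (ha : ∃ A : Set V, Tight G k A ∧ SmallSet k A ∧ a ∈ A)
    (hb : ∃ A : Set V, Tight G k A ∧ SmallSet k A ∧ b ∈ A)
    (hnl : ¬ Laminar (Rmin G k a) (Rmin G k b)) :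
    a ∈ bdry G (Rmin G k b) ∨ b ∈ bdry G (Rmin G k a) :=
  stmt5_general G k a b hG ha hb hnl
end

section
/- Let A be an sa-tight set and B an sb-tight set with κ(s,a) ≥ κ(s,b). If a ∉ A* ∩ B* but b ∈ A* ∩ B*, then A ∩ B is sa-tight and A ∪ B is sb-tight. -/
open Set

variable {V : Type*} [Fintype V] [DecidableEq V]

lemma walk_hits_bdry (G : SimpleGraph V) (X : Set V) :
    ∀ {u t : V} (p : G.Walk u t), u ∈ X → t ∉ X → ∃ v ∈ bdry G X, v ∈ p.support := by
  intro u t p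
  induction p with
  | nil => intro hu ht; exact absurd hu ht
  | @cons u' v' w' h q ih =>
    intro hu ht
    by_cases hv : v' ∈ X
    · obtain ⟨v, hv1, hv2⟩ := ih hv ht
      exact ⟨v, hv1, by simp [SimpleGraph.Walk.support_cons, hv2]⟩
    · exact ⟨v', ⟨hv, u', hu, h⟩, by simp⟩

lemma kappa_le_bdry (G : SimpleGraph V) (s t : V) (X : Set V)
    (hs : s ∈ X) (ht : t ∈ nstar G X) : kappa G s t ≤ (bdry G X).ncard := by
  have htn : t ∉ X ∪ bdry G X := ht
  apply Nat.sInf_le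
  refine ⟨bdry G X, rfl, fun hc => hc.1 hs, fun hc => htn (Or.inr hc), fun p => ?_⟩
  exact walk_hits_bdry G X p hs (fun hx => htn (Or.inl hx))

lemma bdry_submod (G : SimpleGraph V) (A B : Set V) :
    (bdry G (A ∩ B)).ncard + (bdry G (A ∪ B)).ncard ≤
      (bdry G A).ncard + (bdry G B).ncard := by
  set X := bdry G (A ∩ B)
  set Y := bdry G (A ∪ B)
  set S := bdry G A
  set T := bdry G B
  have hXY : X ∪ Y ⊆ S ∪ T := by
    rintro v (⟨hv, x, ⟨hxA, hxB⟩, hadj⟩ | ⟨hv, x, hx, hadj⟩)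
    · by_cases hvA : v ∈ A
      · exact Or.inr ⟨fun hvB => hv ⟨hvA, hvB⟩, x, hxB, hadj⟩
      · exact Or.inl ⟨hvA, x, hxA, hadj⟩
    · rcases hx with hxA | hxB
      · exact Or.inl ⟨fun h => hv (Or.inl h), x, hxA, hadj⟩
      · exact Or.inr ⟨fun h => hv (Or.inr h), x, hxB, hadj⟩
  have hI : X ∩ Y ⊆ S ∩ T := by
    rintro v ⟨⟨_, x, ⟨hxA, hxB⟩, hadj⟩, ⟨hv, _⟩⟩
    exact ⟨⟨fun h => hv (Or.inl h), x, hxA, hadj⟩, ⟨fun h => hv (Or.inr h), x, hxB, hadj⟩⟩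
  have h1 : (X ∪ Y).ncard + (X ∩ Y).ncard ≤ (S ∪ T).ncard + (S ∩ T).ncard := by
    gcongr <;> first
      | exact hXY | exact hI | exact (Set.toFinite _)
  calc X.ncard + Y.ncard = (X ∪ Y).ncard + (X ∩ Y).ncard := by
        rw [Set.ncard_union_add_ncard_inter X Y (Set.toFinite _) (Set.toFinite _)]
    _ ≤ (S ∪ T).ncard + (S ∩ T).ncard := h1
    _ = S.ncard + T.ncard := Set.ncard_union_add_ncard_inter S T (Set.toFinite _) (Set.toFinite _)

theorem stmt10 (G : SimpleGraph V) (s a b : V)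
    (hsa : ¬ G.Adj s a) (hsb : ¬ G.Adj s b) (hna : s ≠ a) (hnb : s ≠ b)
    (A B : Set V) (hA : TightST G s a A) (hB : TightST G s b B)
    (hk : kappa G s b ≤ kappa G s a)
    (hmema : a ∉ nstar G A ∩ nstar G B) (hmemb : b ∈ nstar G A ∩ nstar G B) :
    TightST G s a (A ∩ B) ∧ TightST G s b (A ∪ B) := by
  obtain ⟨hsA, haA, hbA⟩ := hA
  obtain ⟨hsB, hbB, hbdB⟩ := hB
  obtain ⟨hbAs, hbBs⟩ := hmemb
  -- a ∈ nstar of A ∩ B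
  have haA' : a ∉ A ∪ bdry G A := haA
  have han : a ∈ nstar G (A ∩ B) := by
    intro hc
    rcases hc with h | ⟨_, x, ⟨hxA, _⟩, hadj⟩
    · exact haA' (Or.inl h.1)
    · exact haA' (Or.inr ⟨fun h => haA' (Or.inl h), x, hxA, hadj⟩)
  have hbAs' : b ∉ A ∪ bdry G A := hbAs
  have hbBs' : b ∉ B ∪ bdry G B := hbBs
  have hbn : b ∈ nstar G (A ∪ B) := by
    intro hc
    rcases hc with (h | h) | ⟨hv, x, hx, hadj⟩
    · exact hbAs' (Or.inl h)
    · exact hbBs' (Or.inl h)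
    · rcases hx with hxA | hxB
      · exact hbAs' (Or.inr ⟨fun h => hbAs' (Or.inl h), x, hxA, hadj⟩)
      · exact hbBs' (Or.inr ⟨fun h => hbBs' (Or.inl h), x, hxB, hadj⟩)
  have h1 : kappa G s a ≤ (bdry G (A ∩ B)).ncard :=
    kappa_le_bdry G s a (A ∩ B) ⟨hsA, hsB⟩ han
  have h2 : kappa G s b ≤ (bdry G (A ∪ B)).ncard :=
    kappa_le_bdry G s b (A ∪ B) (Or.inl hsA) hbn
  have h3 := bdry_submod G A B
  rw [hbA, hbdB] at h3
  exact ⟨⟨⟨hsA, hsB⟩, han, by omega⟩, ⟨Or.inl hsA, hbn, by omega⟩⟩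
end
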